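/- Let f : ℝ^d → ℝ^k be K-Lipschitz. Suppose random variables X_{t-1}, X₀ and a measurable map x̂₀ satisfy, conditionally on X_t = x_t, the bound E[‖x̂₀(X_{t-1}) - E[X₀ | X_{t-1}]‖ | X_t = x_t] ≤ ‖x̂₀(x_t) - E[X₀ | X_t = x_t]‖ (denoiser monotonicity). Then E[‖f(x̂₀(X_{t-1})) - E[f(X₀)|X_{t-1}]‖ | X_t = x_t] ≤ K‖x̂₀(x_t) - E[X₀|X_t = x_t]‖ + E[δ_f(X_{t-1}) | X_t = x_t], where δ_f(x) := ‖f(E[X₀|X_{t-1}=x]) - E[f(X₀)|X_{t-1}=x]‖. -/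
import Mathlib


open MeasureTheory
open scoped NNReal

/-- ABMS error bound.  Here `ν` is the conditional law of `X_{t-1}` given `X_t = x_t`,
`xhat` is the denoiser, `cm x = E[X₀ | X_{t-1} = x]` is the conditional posterior mean,
`F x = E[f(X₀) | X_{t-1} = x]`, and `mt = E[X₀ | X_t = x_t]`.  Under the denoiser
monotonicity assumption `E[‖xhat(X_{t-1}) - cm(X_{t-1})‖ | X_t = x_t] ≤ ‖xhat(x_t) - mt‖`,
the ABMS error satisfies
`E[‖f(xhat(X_{t-1})) - F(X_{t-1})‖ | X_t = x_t] ≤ K‖xhat(x_t) - mt‖ + E[δ_f(X_{t-1}) | X_t = x_t]`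
with `δ_f(x) = ‖f(cm x) - F x‖`. -/
theorem stmt6 {d k : ℕ} (K : ℝ≥0)
    (f : EuclideanSpace ℝ (Fin d) → EuclideanSpace ℝ (Fin k))
    (hf : LipschitzWith K f)
    (ν : Measure (EuclideanSpace ℝ (Fin d))) [IsProbabilityMeasure ν]
    (xhat cm : EuclideanSpace ℝ (Fin d) → EuclideanSpace ℝ (Fin d))
    (F : EuclideanSpace ℝ (Fin d) → EuclideanSpace ℝ (Fin k))
    (xt mt : EuclideanSpace ℝ (Fin d))
    (hint1 : Integrable (fun x => ‖xhat x - cm x‖) ν)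
    (hint2 : Integrable (fun x => ‖f (cm x) - F x‖) ν)
    (hint3 : Integrable (fun x => ‖f (xhat x) - F x‖) ν)
    (hmono : ∫ x, ‖xhat x - cm x‖ ∂ν ≤ ‖xhat xt - mt‖) :
    ∫ x, ‖f (xhat x) - F x‖ ∂ν ≤
      (K : ℝ) * ‖xhat xt - mt‖ + ∫ x, ‖f (cm x) - F x‖ ∂ν := by
  have step : ∫ x, ‖f (xhat x) - F x‖ ∂ν ≤
      ∫ x, ((K : ℝ) * ‖xhat x - cm x‖ + ‖f (cm x) - F x‖) ∂ν := by
    apply integral_mono hint3 ((hint1.const_mul _).add hint2)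
    intro x
    calc ‖f (xhat x) - F x‖ ≤ ‖f (xhat x) - f (cm x)‖ + ‖f (cm x) - F x‖ :=
          norm_sub_le_norm_sub_add_norm_sub _ _ _
      _ ≤ (K : ℝ) * ‖xhat x - cm x‖ + ‖f (cm x) - F x‖ := by
          gcongr
          simpa [dist_eq_norm] using hf.dist_le_mul (xhat x) (cm x)
  rw [integral_add (hint1.const_mul _) hint2, integral_const_mul] at step
  refine step.trans ?_
  gcongr
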